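/- (Imprecise Perron–Frobenius, regular case) Let T be an upper transition operator on a finite state set X that is regular: there is k ∈ ℕ such that min(T^k 1_{x}) > 0 for every x ∈ X. Then for every function h on X, the sequence Tⁿh converges pointwise to a constant function, i.e., there exists μ(h) ∈ ℝ with lim_{n→∞} (Tⁿh)(x) = μ(h) for all x ∈ X. -/
import Mathlib


open Finset Filter

noncomputable def finf {X : Type*} [Fintype X] [Nonempty X] (g : X → ℝ) : ℝ :=
  Finset.univ.inf' Finset.univ_nonempty g

noncomputable def fsup {X : Type*} [Fintype X] [Nonempty X] (g : X → ℝ) : ℝ :=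
  Finset.univ.sup' Finset.univ_nonempty g

def IsUpperExpectation {X : Type*} [Fintype X] [Nonempty X] (U : (X → ℝ) → ℝ) : Prop :=
  (∀ g : X → ℝ, finf g ≤ U g ∧ U g ≤ fsup g) ∧
  (∀ g₁ g₂ : X → ℝ, U (g₁ + g₂) ≤ U g₁ + U g₂) ∧
  (∀ (l : ℝ), 0 ≤ l → ∀ g : X → ℝ, U (l • g) = l * U g)

def IsUpperTransition {X : Type*} [Fintype X] [Nonempty X] (T : (X → ℝ) → (X → ℝ)) : Prop :=
  ∀ x : X, IsUpperExpectation (fun h => T h x)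

def ind {X : Type*} [DecidableEq X] (y : X) : X → ℝ := fun z => if z = y then 1 else 0

section Aux

variable {X : Type*} [Fintype X] [Nonempty X]

lemma finf_le' (g : X → ℝ) (x : X) : finf g ≤ g x :=
  Finset.inf'_le _ (Finset.mem_univ x)

lemma le_fsup' (g : X → ℝ) (x : X) : g x ≤ fsup g :=
  Finset.le_sup' _ (Finset.mem_univ x)

lemma le_finf' {g : X → ℝ} {c : ℝ} (h : ∀ x, c ≤ g x) : c ≤ finf g :=
  Finset.le_inf' _ _ (fun x _ => h x)

lemma fsup_le' {g : X → ℝ} {c : ℝ} (h : ∀ x, g x ≤ c) : fsup g ≤ c :=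
  Finset.sup'_le _ _ (fun x _ => h x)

variable {T : (X → ℝ) → (X → ℝ)} (hT : IsUpperTransition T)

include hT

lemma tle (g : X → ℝ) (x : X) : T g x ≤ fsup g := ((hT x).1 g).2

lemma tge (g : X → ℝ) (x : X) : finf g ≤ T g x := ((hT x).1 g).1

lemma tconst (c : ℝ) (x : X) : T (fun _ => c) x = c := by
  have h1 := tle hT (fun _ => c) x
  have h2 := tge hT (fun _ => c) x
  have h3 : fsup (fun _ : X => c) ≤ c := fsup_le' (fun _ => le_rfl)
  have h4 : c ≤ finf (fun _ : X => c) := le_finf' (fun _ => le_rfl)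
  linarith

lemma tmono {g₁ g₂ : X → ℝ} (h : ∀ z, g₁ z ≤ g₂ z) (x : X) : T g₁ x ≤ T g₂ x := by
  have h1 : g₁ = g₂ + (g₁ - g₂) := by funext z; simp
  have h2 := (hT x).2.1 g₂ (g₁ - g₂)
  have h3 : T (g₁ - g₂) x ≤ fsup (g₁ - g₂) := tle hT _ x
  have h4 : fsup (g₁ - g₂) ≤ 0 :=
    fsup_le' (fun z => by simpa using sub_nonpos.mpr (h z))
  calc T g₁ x = T (g₂ + (g₁ - g₂)) x := by rw [← h1]
    _ ≤ T g₂ x + T (g₁ - g₂) x := h2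
    _ ≤ T g₂ x := by linarith

lemma tshift (g : X → ℝ) (c : ℝ) (x : X) : T (fun z => g z + c) x = T g x + c := by
  have hcon : T (fun _ => c) x = c := tconst hT c x
  have hcon' : T (fun _ => -c) x = -c := tconst hT (-c) x
  have h1 : T (fun z => g z + c) x ≤ T g x + c := by
    have h3 : (fun z => g z + c) = g + fun _ => c := rfl
    calc T (fun z => g z + c) x = T (g + fun _ => c) x := by rw [h3]
      _ ≤ T g x + T (fun _ => c) x := (hT x).2.1 g (fun _ => c)
      _ = T g x + c := by rw [hcon]
  have h4 : T g x ≤ T (fun z => g z + c) x + (-c) := by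
    have h3 : g = (fun z => g z + c) + fun _ => -c := by funext z; simp
    calc T g x = T ((fun z => g z + c) + fun _ => -c) x := by rw [← h3]
      _ ≤ T (fun z => g z + c) x + T (fun _ => -c) x := (hT x).2.1 _ _
      _ = T (fun z => g z + c) x + (-c) := by rw [hcon']
  linarith

lemma thomog {c : ℝ} (hc : 0 ≤ c) (g : X → ℝ) (x : X) :
    T (fun z => c * g z) x = c * T g x := by
  have h := (hT x).2.2 c hc g
  have h2 : (c • g) = fun z => c * g z := by funext z; simp
  rw [h2] at h
  exact h

lemma titer_mono : ∀ (n : ℕ) {g₁ g₂ : X → ℝ}, (∀ z, g₁ z ≤ g₂ z) → ∀ x, T^[n] g₁ x ≤ T^[n] g₂ x := by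
  intro n
  induction n with
  | zero => intro g₁ g₂ h x; simpa using h x
  | succ n ih =>
    intro g₁ g₂ h x
    rw [Function.iterate_succ_apply, Function.iterate_succ_apply]
    exact ih (fun z => tmono hT h z) x

lemma titer_shift (c : ℝ) :
    ∀ (n : ℕ) (g : X → ℝ) (x : X), T^[n] (fun z => g z + c) x = T^[n] g x + c := by
  intro n
  induction n with
  | zero => intro g x; simp
  | succ n ih =>
    intro g x
    rw [Function.iterate_succ_apply, Function.iterate_succ_apply]
    have h : T (fun z => g z + c) = fun z => T g z + c := funext (tshift hT g c)
    rw [h]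
    exact ih (T g) x

lemma titer_homog {c : ℝ} (hc : 0 ≤ c) :
    ∀ (n : ℕ) (g : X → ℝ) (x : X), T^[n] (fun z => c * g z) x = c * T^[n] g x := by
  intro n
  induction n with
  | zero => intro g x; simp
  | succ n ih =>
    intro g x
    rw [Function.iterate_succ_apply, Function.iterate_succ_apply]
    have h : T (fun z => c * g z) = fun z => c * T g z := funext (thomog hT hc g)
    rw [h]
    exact ih (T g) x

lemma fsup_titer (f : X → ℝ) : ∀ n : ℕ, fsup (T^[n] f) ≤ fsup f := by
  intro n
  induction n with
  | zero => simp
  | succ n ih =>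
    rw [Function.iterate_succ_apply']
    exact le_trans (fsup_le' (fun x => tle hT _ x)) ih

end Aux

theorem imprecise_perron_frobenius_regular {X : Type*} [Fintype X] [Nonempty X] [DecidableEq X]
    (T : (X → ℝ) → (X → ℝ)) (hT : IsUpperTransition T)
    (hreg : ∃ k : ℕ, ∀ x : X, 0 < finf (T^[k] (ind x))) :
    ∀ h : X → ℝ, ∃ μ : ℝ, ∀ x : X, Tendsto (fun n => T^[n] h x) atTop (nhds μ) := by
  obtain ⟨k₀, hk₀⟩ := hreg
  intro h
  set K : ℕ := k₀ + 1 with hKdef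
  set ε : ℝ := finf (fun x : X => finf (T^[K] (ind x))) with hεdef
  -- positivity of ε
  have hεx : ∀ x : X, 0 < finf (T^[K] (ind x)) := by
    intro x
    have h1 : finf (T^[k₀] (ind x)) ≤ finf (T^[K] (ind x)) := by
      apply le_finf'
      intro y
      rw [hKdef, Function.iterate_succ_apply']
      exact tge hT _ y
    exact lt_of_lt_of_le (hk₀ x) h1
  have hεpos : 0 < ε := by
    rw [hεdef]
    unfold finf
    rw [Finset.lt_inf'_iff]
    exact fun x _ => hεx x
  have hεle1 : ε ≤ 1 := by
    obtain ⟨x⟩ := (inferInstance : Nonempty X)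
    have h1 : ε ≤ finf (T^[K] (ind x)) := finf_le' _ x
    have h2 : finf (T^[K] (ind x)) ≤ fsup (T^[K] (ind x)) :=
      le_trans (finf_le' _ x) (le_fsup' _ x)
    have h3 : fsup (T^[K] (ind x)) ≤ fsup (ind x) := fsup_titer hT _ K
    have h4 : fsup (ind x) ≤ 1 := by
      apply fsup_le'
      intro z
      unfold ind
      split <;> norm_num
    linarith
  set m : ℕ → ℝ := fun n => finf (T^[n] h) with hmdef
  set M : ℕ → ℝ := fun n => fsup (T^[n] h) with hMdef
  have hm_mono : Monotone m := by
    apply monotone_nat_of_le_succ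
    intro n
    apply le_finf'
    intro x
    rw [Function.iterate_succ_apply']
    exact tge hT _ x
  have hM_anti : Antitone M := by
    apply antitone_nat_of_succ_le
    intro n
    apply fsup_le'
    intro x
    rw [Function.iterate_succ_apply']
    exact tle hT _ x
  have hmM : ∀ n, m n ≤ M n := by
    intro n
    obtain ⟨x⟩ := (inferInstance : Nonempty X)
    exact le_trans (finf_le' _ x) (le_fsup' _ x)
  -- key contraction step
  have key : ∀ n, M (n + K) - m (n + K) ≤ (1 - ε) * (M n - m n) := by
    intro n
    set g : X → ℝ := T^[n] h with hgdef
    have hc : 0 ≤ M n - m n := by linarith [hmM n]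
    obtain ⟨x₁, _, hx₁⟩ := Finset.exists_mem_eq_sup' (Finset.univ_nonempty (α := X)) g
    have hx₁' : g x₁ = M n := hx₁.symm
    have hlow : ∀ z, (M n - m n) * ind x₁ z + m n ≤ g z := by
      intro z
      unfold ind
      by_cases hz : z = x₁
      · subst hz
        simp [hx₁']
      · simp only [if_neg hz]
        have := finf_le' g z
        simpa using this
    have h1 : ∀ x, m n + (M n - m n) * ε ≤ T^[K] g x := by
      intro x
      have step1 : T^[K] (fun z => (M n - m n) * ind x₁ z + m n) x ≤ T^[K] g x :=
        titer_mono hT K hlow x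
      have step2 : T^[K] (fun z => (M n - m n) * ind x₁ z + m n) x
          = (M n - m n) * T^[K] (ind x₁) x + m n := by
        rw [titer_shift hT (m n) K (fun z => (M n - m n) * ind x₁ z) x,
          titer_homog hT hc K (ind x₁) x]
      have step3 : ε ≤ T^[K] (ind x₁) x :=
        le_trans (finf_le' (fun y : X => finf (T^[K] (ind y))) x₁) (finf_le' _ x)
      nlinarith [mul_le_mul_of_nonneg_left step3 hc]
    have h2 : m n + (M n - m n) * ε ≤ m (n + K) := by
      have : T^[n + K] h = T^[K] g := by
        rw [hgdef, add_comm, Function.iterate_add_apply]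
      rw [hmdef]
      simp only
      rw [this]
      exact le_finf' h1
    have h3 : M (n + K) ≤ M n := hM_anti (Nat.le_add_right n K)
    have h4 := hmM (n + K)
    nlinarith
  -- geometric decay along multiples of K
  have geom : ∀ j : ℕ, M (j * K) - m (j * K) ≤ (1 - ε) ^ j * (M 0 - m 0) := by
    intro j
    induction j with
    | zero => simp
    | succ j ih =>
      have h1 : (j + 1) * K = j * K + K := by ring
      rw [h1]
      calc M (j * K + K) - m (j * K + K) ≤ (1 - ε) * (M (j * K) - m (j * K)) := key (j * K)
        _ ≤ (1 - ε) * ((1 - ε) ^ j * (M 0 - m 0)) := by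
            apply mul_le_mul_of_nonneg_left ih (by linarith)
        _ = (1 - ε) ^ (j + 1) * (M 0 - m 0) := by ring
  -- global decay
  have decay : ∀ n : ℕ, M n - m n ≤ (1 - ε) ^ (n / K) * (M 0 - m 0) := by
    intro n
    have h1 : (n / K) * K ≤ n := Nat.div_mul_le_self n K
    have h2 : M n ≤ M ((n / K) * K) := hM_anti h1
    have h3 : m ((n / K) * K) ≤ m n := hm_mono h1
    have h4 := geom (n / K)
    linarith
  have hdiv : Tendsto (fun n : ℕ => n / K) atTop atTop := by
    apply Filter.tendsto_atTop_atTop.mpr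
    intro b
    refine ⟨b * K, fun a ha => ?_⟩
    rw [Nat.le_div_iff_mul_le (by omega : 0 < K)]
    exact ha
  have hc_tend : Tendsto (fun n => M n - m n) atTop (nhds 0) := by
    have hupper : Tendsto (fun n : ℕ => (1 - ε) ^ (n / K) * (M 0 - m 0)) atTop (nhds 0) := by
      have h1 : Tendsto (fun j : ℕ => (1 - ε) ^ j) atTop (nhds 0) :=
        tendsto_pow_atTop_nhds_zero_of_lt_one (by linarith) (by linarith)
      have h2 := (h1.comp hdiv).mul_const (M 0 - m 0)
      simpa using h2
    apply tendsto_of_tendsto_of_tendsto_of_le_of_le tendsto_const_nhds hupper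
    · intro n
      have := hmM n
      simp only
      linarith
    · intro n
      exact decay n
  set μ : ℝ := ⨆ n, m n with hμdef
  have hbdd : BddAbove (Set.range m) := by
    refine ⟨M 0, ?_⟩
    rintro _ ⟨n, rfl⟩
    exact le_trans (hmM n) (hM_anti (Nat.zero_le n))
  have hm_tend : Tendsto m atTop (nhds μ) := tendsto_atTop_ciSup hm_mono hbdd
  have hM_tend : Tendsto M atTop (nhds μ) := by
    have h1 := hm_tend.add hc_tend
    simp only [add_zero] at h1
    have h2 : (fun n => m n + (M n - m n)) = M := by funext n; ring
    rwa [h2] at h1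
  refine ⟨μ, fun x => ?_⟩
  apply tendsto_of_tendsto_of_tendsto_of_le_of_le hm_tend hM_tend
  · intro n
    exact finf_le' _ x
  · intro n
    exact le_fsup' _ x
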